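/- There exist an absolute constant a₀ > 0 and a function A : (0, a₀) → (0, ∞) such that the following holds for all integers p ≥ 1 and 1 ≤ m ≤ p and all a ∈ (0, a₀): with t = (a/m)·log(ep/m), one has E[exp(t·G_H²)] ≤ A(a). In particular the expectation is bounded by a finite constant depending only on a and not on p or m. -/

import Mathlib

/-!
Split `E[exp (t G_H²)] = ∑ᵢ P(H = i) E[exp (t G_i²)]` according to the size of `t i`.
For `t i ≤ 1/4`, linearizing `G_i²` against a standard Gaussian (Hubbard–Stratonovich) and
`cosh x ≤ exp (x² / 2)` give `E[exp (t G_i²)] ≤ (1 - 2 t i)^{-1/2} ≤ 2`.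
For `t i > 1/4` we have `m < 4 a L i` with `L = log (e p / m)`, and the union bound
`P(H = i) ≤ C(m, i) (m / p)^i = C(m, i) e^{(1 - L) i}` beats the trivial bound
`e^{t i²} ≤ e^{a L i}` once `a` is small, leaving terms at most `2^{-i}`.
Hence the expectation is at most `2 + 2`.
-/

open Real Finset

noncomputable section

/-- The probability `P(H = i)` for `H ~ Hypergeometric(p, m, m)`. -/
def hyperPMF (p m i : ℕ) : ℝ :=
  ((m.choose i : ℝ) * ((p - m).choose (m - i) : ℝ)) / (p.choose m : ℝ)

/-- `E[exp (t · G_i²)]` where `G_i` is the position of a symmetric (Rademacher)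
random walk after `i` steps. -/
def walkSqMGF (t : ℝ) (i : ℕ) : ℝ :=
  (1 / 2 ^ i) * ∑ s : Fin i → Bool, Real.exp (t * (∑ j, (if s j then (1 : ℝ) else -1)) ^ 2)

/-- `E[exp (t · G_H²)]` where `H ~ Hypergeometric(p, m, m)` and `G` is an independent
symmetric random walk. -/
def hyperWalkMGF (p m : ℕ) (t : ℝ) : ℝ :=
  ∑ i ∈ Finset.range (m + 1), hyperPMF p m i * walkSqMGF t i

/-- `E[exp (λ · H²)]` where `H ~ Hypergeometric(p, m, m)`. -/
def hyperSqMGF (p m : ℕ) (lam : ℝ) : ℝ :=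
  ∑ i ∈ Finset.range (m + 1), hyperPMF p m i * Real.exp (lam * (i : ℝ) ^ 2)

end

open MeasureTheory

namespace Nat

theorem choose_mul_pow_le_choose_mul_pow {m p : ℕ} (hmp : m ≤ p) (i : ℕ) :
    m.choose i * p ^ i ≤ p.choose i * m ^ i := by
  suffices m.descFactorial i * p ^ i ≤ p.descFactorial i * m ^ i by
    simp only [descFactorial_eq_factorial_mul_choose, Nat.mul_assoc] at this
    exact Nat.le_of_mul_le_mul_left this (factorial_pos i)
  induction i with
  | zero => simp
  | succ i ih =>
    have hstep : (m - i) * p ≤ (p - i) * m := by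
      rcases le_total i m with h | h
      · zify [h, h.trans hmp]; nlinarith
      · simp [Nat.sub_eq_zero_of_le h]
    calc m.descFactorial (i + 1) * p ^ (i + 1)
        = (m - i) * p * (m.descFactorial i * p ^ i) := by rw [descFactorial_succ]; ring
      _ ≤ (p - i) * m * (p.descFactorial i * m ^ i) := Nat.mul_le_mul hstep ih
      _ = p.descFactorial (i + 1) * m ^ (i + 1) := by rw [descFactorial_succ]; ring

theorem choose_sub_sub_mul_pow_le {i m p : ℕ} (him : i ≤ m) (hmp : m ≤ p) :
    (p - m).choose (m - i) * p ^ i ≤ p.choose m * m ^ i := by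
  have hpi : 0 < p.choose i := choose_pos (him.trans hmp)
  refine Nat.le_of_mul_le_mul_left ?_ hpi
  calc p.choose i * ((p - m).choose (m - i) * p ^ i)
      ≤ p.choose i * (p - i).choose (m - i) * p ^ i := by
        rw [← Nat.mul_assoc]; gcongr
    _ = p.choose m * (m.choose i * p ^ i) := by rw [← choose_mul him]; ring
    _ ≤ p.choose m * (p.choose i * m ^ i) :=
        Nat.mul_le_mul_left _ (choose_mul_pow_le_choose_mul_pow hmp i)
    _ = p.choose i * (p.choose m * m ^ i) := by ring

end Nat

theorem hyperPMF_nonneg (p m i : ℕ) : 0 ≤ hyperPMF p m i := by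
  unfold hyperPMF; positivity

theorem sum_hyperPMF {p m : ℕ} (hmp : m ≤ p) :
    ∑ i ∈ range (m + 1), hyperPMF p m i = 1 := by
  have hvdm : ∑ i ∈ range (m + 1), m.choose i * (p - m).choose (m - i) = p.choose m := by
    simpa [Nat.sum_antidiagonal_eq_sum_range_succ_mk, Nat.add_sub_cancel' hmp]
      using (Nat.add_choose_eq m (p - m) m).symm
  have hpos : (0 : ℝ) < p.choose m := by exact_mod_cast Nat.choose_pos hmp
  simp only [hyperPMF, ← sum_div]
  rw [div_eq_one_iff_eq hpos.ne']
  exact_mod_cast hvdm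

theorem hyperPMF_le_choose_mul_pow {p m i : ℕ} (him : i ≤ m) (hmp : m ≤ p) :
    hyperPMF p m i ≤ m.choose i * ((m : ℝ) / p) ^ i := by
  have hpm : (0 : ℝ) < p.choose m := by exact_mod_cast Nat.choose_pos hmp
  have hpi : (0 : ℝ) < (p : ℝ) ^ i := by
    rcases i.eq_zero_or_pos with rfl | hi
    · simp
    · exact pow_pos (by exact_mod_cast hi.trans_le (him.trans hmp)) i
  have key : ((p - m).choose (m - i) : ℝ) * p ^ i ≤ p.choose m * m ^ i := by
    exact_mod_cast Nat.choose_sub_sub_mul_pow_le him hmp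
  rw [hyperPMF, div_pow, mul_div_assoc]
  refine mul_le_mul_of_nonneg_left ?_ (Nat.cast_nonneg _)
  rw [div_le_div_iff₀ hpm hpi]
  linarith

def walkSum {i : ℕ} (v : Fin i → Bool) : ℝ :=
  ∑ j, if v j then 1 else -1

theorem walkSqMGF_eq_average (t : ℝ) (i : ℕ) :
    walkSqMGF t i = (2 ^ i)⁻¹ * ∑ v : Fin i → Bool, exp (t * walkSum v ^ 2) := by
  rw [walkSqMGF, one_div]; rfl

theorem abs_walkSum_le {i : ℕ} (v : Fin i → Bool) : |walkSum v| ≤ i := by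
  calc |walkSum v| ≤ ∑ j, |if v j then (1 : ℝ) else -1| := abs_sum_le_sum_abs _ _
    _ = i := by simp [apply_ite]

theorem sum_exp_mul_walkSum (i : ℕ) (x : ℝ) :
    ∑ v : Fin i → Bool, exp (x * walkSum v) = (2 * cosh x) ^ i := by
  have hstep : ∑ b : Bool, exp (x * if b then 1 else -1) = 2 * cosh x := by
    simp [cosh_eq]; ring
  simp only [walkSum, mul_sum, exp_sum]
  rw [← Fintype.prod_sum (fun (_ : Fin i) (b : Bool) => exp (x * if b then 1 else -1)), hstep,
    prod_const, card_univ, Fintype.card_fin]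

theorem walkSqMGF_le_exp_mul_sq {t : ℝ} (ht : 0 ≤ t) (i : ℕ) :
    walkSqMGF t i ≤ exp (t * i ^ 2) := by
  have hterm (v : Fin i → Bool) : exp (t * walkSum v ^ 2) ≤ exp (t * i ^ 2) := by
    refine exp_le_exp.2 (mul_le_mul_of_nonneg_left ?_ ht)
    exact sq_le_sq' (abs_le.1 (abs_walkSum_le v)).1 (abs_le.1 (abs_walkSum_le v)).2
  calc walkSqMGF t i ≤ (2 ^ i)⁻¹ * ∑ _v : Fin i → Bool, exp (t * i ^ 2) := by
        rw [walkSqMGF_eq_average]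
        exact mul_le_mul_of_nonneg_left (sum_le_sum fun v _ => hterm v) (by positivity)
    _ = exp (t * i ^ 2) := by simp

theorem exp_mul_sub_sq_div_two (c z : ℝ) :
    exp (c * z - z ^ 2 / 2) = exp (c ^ 2 / 2) * exp (-(1 / 2) * (z - c) ^ 2) := by
  rw [← exp_add]; ring_nf

theorem integrable_exp_mul_sub_sq_div_two (c : ℝ) :
    Integrable fun z : ℝ => exp (c * z - z ^ 2 / 2) := by
  simp only [exp_mul_sub_sq_div_two]
  exact ((integrable_exp_neg_mul_sq (by norm_num)).comp_sub_right c).const_mul _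

theorem integral_exp_mul_sub_sq_div_two (c : ℝ) :
    ∫ z : ℝ, exp (c * z - z ^ 2 / 2) = √(2 * π) * exp (c ^ 2 / 2) := by
  simp only [exp_mul_sub_sq_div_two]
  rw [integral_const_mul, integral_sub_right_eq_self (fun z => exp (-(1 / 2) * z ^ 2)),
    integral_gaussian, mul_comm]
  norm_num [div_div_eq_mul_div, mul_comm]

theorem walkSqMGF_eq_integral {t : ℝ} (ht : 0 ≤ t) (i : ℕ) :
    walkSqMGF t i = (√(2 * π))⁻¹ * ∫ z : ℝ, cosh (√(2 * t) * z) ^ i * exp (-z ^ 2 / 2) := by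
  set s := √(2 * t)
  have hs : s ^ 2 = 2 * t := sq_sqrt (by linarith)
  have hlin (v : Fin i → Bool) : exp (t * walkSum v ^ 2)
      = (√(2 * π))⁻¹ * ∫ z : ℝ, exp (s * walkSum v * z - z ^ 2 / 2) := by
    rw [integral_exp_mul_sub_sq_div_two, inv_mul_cancel_left₀ (by positivity), mul_pow, hs]
    ring_nf
  have hsum (z : ℝ) : (2 ^ i)⁻¹ * ∑ v : Fin i → Bool, exp (s * walkSum v * z - z ^ 2 / 2)
      = cosh (s * z) ^ i * exp (-z ^ 2 / 2) := by
    have hsplit (v : Fin i → Bool) : exp (s * walkSum v * z - z ^ 2 / 2)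
        = exp (s * z * walkSum v) * exp (-z ^ 2 / 2) := by
      rw [← exp_add]; ring_nf
    simp only [hsplit, ← sum_mul, sum_exp_mul_walkSum, mul_pow]
    field_simp
  rw [walkSqMGF_eq_average]
  simp only [hlin, ← mul_sum]
  rw [← integral_finsetSum _ fun v _ => integrable_exp_mul_sub_sq_div_two _, mul_left_comm,
    ← integral_const_mul]
  simp only [hsum]

theorem walkSqMGF_le_inv_sqrt {t : ℝ} (ht : 0 ≤ t) {i : ℕ} (hti : 2 * t * i < 1) :
    walkSqMGF t i ≤ (√(1 - 2 * t * i))⁻¹ := by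
  set b := (1 - 2 * t * i) / 2
  have hb : 0 < b := by simp only [b]; linarith
  have hpoint (z : ℝ) : cosh (√(2 * t) * z) ^ i * exp (-z ^ 2 / 2) ≤ exp (-b * z ^ 2) := by
    calc cosh (√(2 * t) * z) ^ i * exp (-z ^ 2 / 2)
        ≤ exp ((√(2 * t) * z) ^ 2 / 2) ^ i * exp (-z ^ 2 / 2) := by
          gcongr
          exact cosh_le_exp_half_sq _
      _ = exp (-b * z ^ 2) := by
          rw [← exp_nat_mul, ← exp_add, mul_pow, sq_sqrt (by linarith)]
          simp only [b]; ring_nf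
  have hint : ∫ z : ℝ, cosh (√(2 * t) * z) ^ i * exp (-z ^ 2 / 2) ≤ √(π / b) := by
    rw [← integral_gaussian]
    exact integral_mono_of_nonneg (.of_forall fun z => by positivity)
      (integrable_exp_neg_mul_sq hb) (.of_forall hpoint)
  calc walkSqMGF t i ≤ (√(2 * π))⁻¹ * √(π / b) := by
        rw [walkSqMGF_eq_integral ht]; gcongr
    _ = (√(1 - 2 * t * i))⁻¹ := by
        rw [show π / b = 2 * π / (1 - 2 * t * i) by simp only [b]; field_simp,
          sqrt_div' _ (by linarith)]
        field_simp

theorem walkSqMGF_le_two {t : ℝ} (ht : 0 ≤ t) {i : ℕ} (hti : t * i ≤ 1 / 4) :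
    walkSqMGF t i ≤ 2 := by
  refine (walkSqMGF_le_inv_sqrt ht (by linarith)).trans ?_
  rw [inv_le_comm₀ (sqrt_pos.2 (by linarith)) two_pos, le_sqrt' (by norm_num)]
  linarith

theorem one_le_log_exp_one_mul_div {x y : ℝ} (hy : 0 < y) (hyx : y ≤ x) :
    1 ≤ log (exp 1 * x / y) := by
  rw [le_log_iff_exp_le (by have := hy.trans_le hyx; positivity), le_div_iff₀ hy]
  gcongr

theorem hyperPMF_mul_walkSqMGF_le_of_tail {p m i : ℕ} {a t : ℝ} (him : i ≤ m) (hmp : m ≤ p)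
    (hm : 0 < m) (ha : a ≤ 1 / 100) (ht : t = a / m * log (exp 1 * p / m))
    (htail : 1 / 4 < t * i) :
    hyperPMF p m i * walkSqMGF t i ≤ (1 / 2) ^ i := by
  set L := log (exp 1 * p / m)
  have hm' : (0 : ℝ) < m := by exact_mod_cast hm
  have hmp' : (m : ℝ) ≤ p := by exact_mod_cast hmp
  have hp' : (0 : ℝ) < p := hm'.trans_le hmp'
  have hi' : (0 : ℝ) ≤ i := i.cast_nonneg
  have hL : 1 ≤ L := one_le_log_exp_one_mul_div hm' hmp'
  have hratio : (m : ℝ) / p = exp (1 - L) := by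
    rw [exp_sub, exp_log (by positivity)]
    field_simp
  have htm : t * m = a * L := by rw [ht]; field_simp
  have ht0 : 0 ≤ t := by nlinarith
  have hti : t * i ≤ a * L := htm ▸ mul_le_mul_of_nonneg_left (by exact_mod_cast him) ht0
  have hm_le : (m : ℝ) ≤ 4 * a * L * i := by nlinarith
  have hchoose : (m.choose i : ℝ) ≤ exp m :=
    calc (m.choose i : ℝ) ≤ 2 ^ m := by exact_mod_cast Nat.choose_le_two_pow m i
      _ ≤ exp 1 ^ m := by gcongr; linarith [add_one_le_exp 1]
      _ = exp m := by rw [← exp_nat_mul, mul_one]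
  have hP : hyperPMF p m i ≤ exp m * exp (1 - L) ^ i := by
    refine (hyperPMF_le_choose_mul_pow him hmp).trans ?_
    rw [hratio]
    gcongr
  have hW : walkSqMGF t i ≤ exp (a * L * i) := by
    refine (walkSqMGF_le_exp_mul_sq ht0 i).trans (exp_le_exp.2 ?_)
    nlinarith
  have hrate : 1 - L + 5 * a * L ≤ -log 2 := by nlinarith [log_two_lt_d9]
  calc hyperPMF p m i * walkSqMGF t i
      ≤ exp m * exp (1 - L) ^ i * exp (a * L * i) :=
        mul_le_mul hP hW (by rw [walkSqMGF]; positivity) (by positivity)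
    _ = exp (m + i * (1 - L + a * L)) := by rw [← exp_nat_mul, ← exp_add, ← exp_add]; ring_nf
    _ ≤ exp (i * -log 2) := exp_le_exp.2 (by nlinarith [mul_le_mul_of_nonneg_left hrate hi'])
    _ = (1 / 2) ^ i := by rw [exp_nat_mul, exp_neg, exp_log two_pos, one_div]

/-- uniform bound on the MGF of the squared random walk stopped at an
independent hypergeometric time. -/
theorem hyperWalkMGF_uniform_bound :
    ∃ a₀ : ℝ, 0 < a₀ ∧
      ∃ A : ℝ → ℝ,
        (∀ a, 0 < a → a < a₀ → 0 < A a) ∧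
        ∀ (p m : ℕ), 1 ≤ m → m ≤ p →
          ∀ a : ℝ, 0 < a → a < a₀ →
            ∀ t : ℝ, t = (a / m) * Real.log (Real.exp 1 * p / m) →
              hyperWalkMGF p m t ≤ A a := by
  refine ⟨1 / 100, by norm_num, fun _ => 4, fun _ _ _ => by norm_num, ?_⟩
  intro p m hm hmp a _ ha₀ t ht
  have hm' : (0 : ℝ) < m := by exact_mod_cast hm
  have ht0 : 0 ≤ t := by
    have := one_le_log_exp_one_mul_div hm' (by exact_mod_cast hmp : (m : ℝ) ≤ p)
    rw [ht]; positivity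
  have hterm (i : ℕ) (hi : i ∈ range (m + 1)) :
      hyperPMF p m i * walkSqMGF t i ≤ 2 * hyperPMF p m i + (1 / 2) ^ i := by
    rcases le_or_gt (t * i) (1 / 4) with hbulk | htail
    · rw [mul_comm 2]
      exact le_add_of_le_of_nonneg
        (mul_le_mul_of_nonneg_left (walkSqMGF_le_two ht0 hbulk) (hyperPMF_nonneg p m i))
        (by positivity)
    · exact le_add_of_nonneg_of_le (mul_nonneg zero_le_two (hyperPMF_nonneg p m i))
        (hyperPMF_mul_walkSqMGF_le_of_tail (by simpa [Nat.lt_succ_iff] using hi) hmp hm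
          ha₀.le ht htail)
  calc hyperWalkMGF p m t
      ≤ ∑ i ∈ range (m + 1), (2 * hyperPMF p m i + (1 / 2) ^ i) := sum_le_sum hterm
    _ = 2 * ∑ i ∈ range (m + 1), hyperPMF p m i + ∑ i ∈ range (m + 1), (1 / 2 : ℝ) ^ i := by
        rw [sum_add_distrib, mul_sum]
    _ ≤ 4 := by rw [sum_hyperPMF hmp]; linarith [sum_geometric_two_le (m + 1)]
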